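/- Let N < d_x, let X, X_ε ∈ ℝ^{d_x×N} both have rank N, and let Y ∈ ℝ^{d_y×N}. Let d_1 ∈ ℕ, set p := min(d_x, d_1, d_y), and assume either rank(Y) ≤ p or the p-th largest eigenvalue of YYᵀ is strictly greater than its (p+1)-th largest eigenvalue. Let λ > 0, η > 0, and let (W̃_2, W̃_1) ∈ ℝ^{d_y×d_1} × ℝ^{d_1×d_x} be a global minimizer of the clean loss ‖W_2W_1X − Y‖_F². Let W_1 : [0,∞) → ℝ^{d_1×d_x} and W_2 : [0,∞) → ℝ^{d_y×d_1} be differentiable trajectories satisfying the gradient-flow equation W_1'(t) = η·W_2(t)ᵀ(Y − W_2(t)W_1(t)X_ε)X_εᵀ + η·λ·(W̃_1X − W_1(t)X_ε)X_εᵀ for all t ≥ 0, such that: ‖W_1(0)‖_F ≤ δ for some δ > 0; ‖W_2(t)‖_F ≤ M for all t ≥ 0 and some M > 0; and W_1(t), W_2(t) converge as t → ∞ to matrices W_1(∞), W_2(∞) forming a global minimizer of the student-teacher loss ‖W_2W_1X_ε − Y‖_F² + λ‖W_1X_ε − W̃_1X‖_F². Then ‖W_2(∞)W_1(∞) − U_pU_pᵀY(X_εᵀX_ε)^{-1}X_εᵀ‖_F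 ≤ M·δ. -/

import Mathlib

/-!
Every gradient of the student-teacher loss with respect to `W₁` has the form `(⋯) X_εᵀ`, so the
flow never moves `W₁(t)` along `col(X_ε)^⊥`: with `P = 1 - X_ε X_ε⁺` the orthogonal projection
onto that complement, `W₁(t) P = W₁(0) P` for all `t`, hence also at `t = ∞`. Therefore
`W₂(∞) W₁(∞) - Z X_ε⁺ = W₂(∞) W₁(0) P`, where `Z = W₂(∞) W₁(∞) X_ε`, and the right-hand side has
norm at most `M δ`.

It remains to see `Z = U_p U_pᵀ Y`. Choosing `W₁'` with `W₁' X_ε = W̃₁ X` in the minimality of the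
limit and using the optimality of the teacher (with `X` of full column rank), `Z` is a best
approximation of `Y` among all products `C₂ C₁` through dimension `d₁`, while `rank Z ≤ p`.
This is the uniqueness part of the Eckart–Young theorem, proved by Ky Fan's argument in the
eigenbasis of `YYᵀ`: if `Q` is the orthogonal projection onto `col(Z)`, then
`‖Z - Y‖² = ‖Z - QY‖² + ∑ᵢ (1 - Qᵢᵢ) σᵢ` with `0 ≤ Qᵢᵢ ≤ 1` and `∑ᵢ Qᵢᵢ ≤ p`, and under the
eigenvalue gap the weights `cᵢ = Qᵢᵢ` minimising `∑ᵢ (1 - cᵢ) σᵢ` are exactly `cᵢ = [i < p]`.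
-/

open Matrix

noncomputable section

attribute [local instance] Matrix.normedAddCommGroup Matrix.normedSpace

/-- Squared Frobenius norm ‖M‖_F² of a real matrix. -/
def frobSq {m n : ℕ} (M : Matrix (Fin m) (Fin n) ℝ) : ℝ := ∑ i, ∑ j, (M i j) ^ 2

/-- Frobenius norm ‖M‖_F of a real matrix. -/
def frobNorm {m n : ℕ} (M : Matrix (Fin m) (Fin n) ℝ) : ℝ := Real.sqrt (frobSq M)

open Filter Topology

section Frobenius

variable {m n k : ℕ}

lemma frobSq_nonneg (M : Matrix (Fin m) (Fin n) ℝ) : 0 ≤ frobSq M := by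
  unfold frobSq
  positivity

lemma frobNorm_nonneg (M : Matrix (Fin m) (Fin n) ℝ) : 0 ≤ frobNorm M :=
  Real.sqrt_nonneg _

lemma frobSq_eq_trace (M : Matrix (Fin m) (Fin n) ℝ) : frobSq M = (Mᵀ * M).trace := by
  simp only [frobSq, trace, diag, mul_apply, transpose_apply, sq]
  exact Finset.sum_comm

lemma frobSq_eq_zero_iff {M : Matrix (Fin m) (Fin n) ℝ} : frobSq M = 0 ↔ M = 0 := by
  rw [frobSq_eq_trace, ← conjTranspose_eq_transpose_of_trivial,
    trace_conjTranspose_mul_self_eq_zero_iff]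

lemma frobSq_neg (M : Matrix (Fin m) (Fin n) ℝ) : frobSq (-M) = frobSq M := by
  simp [frobSq]

lemma frobSq_transpose (M : Matrix (Fin m) (Fin n) ℝ) : frobSq Mᵀ = frobSq M := by
  rw [frobSq_eq_trace, frobSq_eq_trace, transpose_transpose, trace_mul_comm]

lemma frobSq_add_of_transpose_mul_eq_zero {A B : Matrix (Fin m) (Fin n) ℝ} (h : Aᵀ * B = 0) :
    frobSq (A + B) = frobSq A + frobSq B := by
  have h' : Bᵀ * A = 0 := by rw [← transpose_transpose A, ← transpose_mul, h, transpose_zero]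
  simp only [frobSq_eq_trace, transpose_add, Matrix.add_mul, Matrix.mul_add, h, h', add_zero,
    zero_add, trace_add]

lemma frobSq_mul_of_transpose_mul_self_eq_one {O : Matrix (Fin k) (Fin m) ℝ} (hO : Oᵀ * O = 1)
    (M : Matrix (Fin m) (Fin n) ℝ) : frobSq (O * M) = frobSq M := by
  rw [frobSq_eq_trace, frobSq_eq_trace, transpose_mul, Matrix.mul_assoc, ← Matrix.mul_assoc Oᵀ,
    hO, Matrix.one_mul]

lemma frobSq_mul_le (A : Matrix (Fin m) (Fin k) ℝ) (B : Matrix (Fin k) (Fin n) ℝ) :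
    frobSq (A * B) ≤ frobSq A * frobSq B := by
  calc frobSq (A * B) = ∑ i, ∑ j, (∑ l, A i l * B l j) ^ 2 := rfl
    _ ≤ ∑ i, ∑ j, (∑ l, A i l ^ 2) * ∑ l, B l j ^ 2 := by
        gcongr with i _ j _
        exact Finset.sum_mul_sq_le_sq_mul_sq _ _ _
    _ = frobSq A * frobSq B := by
        rw [← Finset.sum_mul_sum, frobSq, frobSq]
        exact congrArg _ Finset.sum_comm

lemma frobNorm_mul_le (A : Matrix (Fin m) (Fin k) ℝ) (B : Matrix (Fin k) (Fin n) ℝ) :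
    frobNorm (A * B) ≤ frobNorm A * frobNorm B := by
  rw [frobNorm, frobNorm, frobNorm, ← Real.sqrt_mul (frobSq_nonneg A)]
  exact Real.sqrt_le_sqrt (frobSq_mul_le A B)

lemma continuous_frobNorm : Continuous (frobNorm : Matrix (Fin m) (Fin n) ℝ → ℝ) := by
  unfold frobNorm frobSq
  fun_prop

end Frobenius

namespace IsStarProjection

variable {m n : ℕ} {Q : Matrix (Fin m) (Fin m) ℝ}

lemma transpose_eq (hQ : IsStarProjection Q) : Qᵀ = Q := by
  simpa [star_eq_conjTranspose] using hQ.isSelfAdjoint.star_eq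

lemma frobSq_eq_add (hQ : IsStarProjection Q) (M : Matrix (Fin m) (Fin n) ℝ) :
    frobSq M = frobSq (Q * M) + frobSq ((1 - Q) * M) := by
  rw [← frobSq_add_of_transpose_mul_eq_zero, ← Matrix.add_mul, add_sub_cancel, Matrix.one_mul]
  rw [transpose_mul, hQ.transpose_eq, Matrix.mul_assoc, ← Matrix.mul_assoc Q,
    hQ.mul_one_sub_self, Matrix.zero_mul, Matrix.mul_zero]

lemma frobNorm_mul_le (hQ : IsStarProjection Q) (M : Matrix (Fin n) (Fin m) ℝ) :
    frobNorm (M * Q) ≤ frobNorm M := by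
  apply Real.sqrt_le_sqrt
  rw [← frobSq_transpose, transpose_mul, hQ.transpose_eq, ← frobSq_transpose M,
    hQ.frobSq_eq_add Mᵀ]
  exact le_add_of_nonneg_right (frobSq_nonneg _)

lemma diag_eq_sum_sq (hQ : IsStarProjection Q) (i : Fin m) : Q i i = ∑ k, Q k i ^ 2 := by
  calc Q i i = (Qᵀ * Q) i i := by rw [hQ.transpose_eq, hQ.isIdempotentElem.eq]
    _ = ∑ k, Q k i ^ 2 := by simp only [mul_apply, transpose_apply, sq]

lemma diag_nonneg (hQ : IsStarProjection Q) (i : Fin m) : 0 ≤ Q i i := by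
  rw [hQ.diag_eq_sum_sq]
  positivity

lemma diag_le_one (hQ : IsStarProjection Q) (i : Fin m) : Q i i ≤ 1 := by
  simpa using hQ.one_sub.diag_nonneg i

lemma apply_eq_zero_of_diag_eq_zero (hQ : IsStarProjection Q) {i : Fin m} (h : Q i i = 0)
    (k : Fin m) : Q k i = 0 := by
  rw [hQ.diag_eq_sum_sq, Fintype.sum_eq_zero_iff_of_nonneg (fun _ => sq_nonneg _)] at h
  simpa using congrFun h k

lemma eq_diagonal_diag (hQ : IsStarProjection Q) (h : ∀ i, Q i i = 0 ∨ Q i i = 1) :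
    Q = diagonal Q.diag := by
  ext k i
  rcases h i with h0 | h1
  · rw [hQ.apply_eq_zero_of_diag_eq_zero h0, diagonal_apply]
    split_ifs with hki <;> simp_all
  · have := hQ.one_sub.apply_eq_zero_of_diag_eq_zero (i := i) (by simp [h1]) k
    rw [Matrix.sub_apply, sub_eq_zero] at this
    rw [← this, one_apply, diagonal_apply]
    split_ifs with hki <;> simp_all

lemma frobSq_mul_eq_sum {σ : Fin m → ℝ} {Y : Matrix (Fin m) (Fin n) ℝ}
    (hQ : IsStarProjection Q) (hY : Y * Yᵀ = diagonal σ) :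
    frobSq (Q * Y) = ∑ i, Q i i * σ i := by
  rw [frobSq_eq_trace, transpose_mul, hQ.transpose_eq, Matrix.mul_assoc, ← Matrix.mul_assoc Q,
    hQ.isIdempotentElem.eq, trace_mul_comm, Matrix.mul_assoc, hY]
  simp [trace, mul_diagonal]

end IsStarProjection

theorem Matrix.trace_eq_rank_of_isIdempotentElem {ι K : Type*} [Fintype ι] [DecidableEq ι]
    [Field K] {Q : Matrix ι ι K} (hQ : IsIdempotentElem Q) : Q.trace = Q.rank := by
  have h : IsIdempotentElem (toLin' Q) := hQ.map toLinAlgEquiv'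
  rw [← trace_toLin'_eq, (LinearMap.IsIdempotentElem.isProj_range _ h).trace]
  rfl

theorem Matrix.exists_isStarProjection_mul_eq_self {m n : ℕ} (Z : Matrix (Fin m) (Fin n) ℝ) :
    ∃ Q : Matrix (Fin m) (Fin m) ℝ, IsStarProjection Q ∧ Q * Z = Z ∧ Q.rank = Z.rank := by
  set K := LinearMap.range (toEuclideanLin Z)
  set e := toEuclideanCLM (n := Fin m) (𝕜 := ℝ)
  have hQ : toEuclideanLin (e.symm K.starProjection) = K.starProjection := by
    rw [← coe_toEuclideanCLM_eq_toEuclideanLin, StarAlgEquiv.apply_symm_apply]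
  refine ⟨e.symm K.starProjection,
    isStarProjection_starProjection.map e.symm.toStarAlgHom, ?_, ?_⟩
  · apply (toEuclideanLin (m := Fin m) (n := Fin n) (𝕜 := ℝ)).injective
    ext v : 1
    rw [toLpLin_mul, hQ]
    exact K.starProjection_eq_self_iff.2 (LinearMap.mem_range_self _ v)
  · rw [rank_eq_finrank_range_toLin _ (PiLp.basisFun 2 ℝ _) (PiLp.basisFun 2 ℝ _),
      rank_eq_finrank_range_toLin _ (PiLp.basisFun 2 ℝ _) (PiLp.basisFun 2 ℝ _),
      ← toLpLin_eq_toLin, ← toLpLin_eq_toLin, hQ]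
    exact congrArg (fun S : Submodule ℝ _ => Module.finrank ℝ S) K.range_starProjection

def prefixIndicator (n p : ℕ) : Fin n → ℝ := fun i => if (i : ℕ) < p then 1 else 0

section KyFan

variable {n p : ℕ} {σ c : Fin n → ℝ}

lemma sum_prefixIndicator (hp : p ≤ n) : ∑ i, prefixIndicator n p i = p := by
  simp [prefixIndicator, Finset.sum_boole, Fin.card_filter_val_lt, hp]

/- With `π = σ ⟨p, _⟩` the three correction terms are nonnegative (Ky Fan's inequality), and they
all vanish only for `c = prefixIndicator n p` when `σ` has a gap at `p`. -/
lemma sum_one_sub_mul_eq (hp : p ≤ n) (σ c : Fin n → ℝ) (π : ℝ) :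
    ∑ i, (1 - c i) * σ i = ∑ i, (1 - prefixIndicator n p i) * σ i
      + ∑ i, prefixIndicator n p i * (σ i - π) * (1 - c i)
      + ∑ i, (1 - prefixIndicator n p i) * (π - σ i) * c i + π * (p - ∑ i, c i) := by
  rw [← sum_prefixIndicator hp, ← Finset.sum_sub_distrib, Finset.mul_sum,
    ← Finset.sum_add_distrib, ← Finset.sum_add_distrib, ← Finset.sum_add_distrib]
  exact Finset.sum_congr rfl fun i _ => by ring

lemma prefixIndicator_mul_sub_mul_nonneg (hp : p < n) (hσ : Antitone σ) (hc1 : ∀ i, c i ≤ 1)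
    (i : Fin n) : 0 ≤ prefixIndicator n p i * (σ i - σ ⟨p, hp⟩) * (1 - c i) := by
  unfold prefixIndicator
  split_ifs with hi
  · rw [one_mul]
    exact mul_nonneg (sub_nonneg.2 (hσ (Fin.le_def.2 hi.le : i ≤ ⟨p, hp⟩)))
      (sub_nonneg.2 (hc1 i))
  · simp

lemma one_sub_prefixIndicator_mul_sub_mul_nonneg (hp : p < n) (hσ : Antitone σ)
    (hc0 : ∀ i, 0 ≤ c i) (i : Fin n) :
    0 ≤ (1 - prefixIndicator n p i) * (σ ⟨p, hp⟩ - σ i) * c i := by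
  unfold prefixIndicator
  split_ifs with hi
  · simp
  · rw [sub_zero, one_mul]
    exact mul_nonneg (sub_nonneg.2 (hσ (Fin.le_def.2 (not_lt.1 hi) : (⟨p, hp⟩ : Fin n) ≤ i)))
      (hc0 i)

lemma sum_one_sub_prefixIndicator_mul_le (hp : p < n) (hσ : Antitone σ)
    (hσp : 0 ≤ σ ⟨p, hp⟩) (hc0 : ∀ i, 0 ≤ c i) (hc1 : ∀ i, c i ≤ 1) (hc : ∑ i, c i ≤ p) :
    ∑ i, (1 - prefixIndicator n p i) * σ i ≤ ∑ i, (1 - c i) * σ i := by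
  rw [sum_one_sub_mul_eq hp.le σ c (σ ⟨p, hp⟩)]
  have h₁ := Finset.sum_nonneg fun i (_ : i ∈ Finset.univ) =>
    prefixIndicator_mul_sub_mul_nonneg hp hσ hc1 i
  have h₂ := Finset.sum_nonneg fun i (_ : i ∈ Finset.univ) =>
    one_sub_prefixIndicator_mul_sub_mul_nonneg hp hσ hc0 i
  have h₃ := mul_nonneg hσp (sub_nonneg.2 hc)
  linarith

lemma eq_prefixIndicator_of_forall_lt (hp : p ≤ n) (hc0 : ∀ i, 0 ≤ c i) (hc : ∑ i, c i ≤ p)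
    (hhead : ∀ i : Fin n, (i : ℕ) < p → c i = 1) : c = prefixIndicator n p := by
  have hle : ∀ i ∈ Finset.univ, 0 ≤ c i - prefixIndicator n p i := by
    intro i _
    unfold prefixIndicator
    split_ifs with hi
    · rw [hhead i hi, sub_self]
    · simpa using hc0 i
  have hsum : ∑ i, (c i - prefixIndicator n p i) = 0 := by
    refine le_antisymm ?_ (Finset.sum_nonneg hle)
    rw [Finset.sum_sub_distrib, sum_prefixIndicator hp]
    linarith
  funext i
  linarith [(Finset.sum_eq_zero_iff_of_nonneg hle).1 hsum i (Finset.mem_univ i)]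

lemma eq_prefixIndicator_of_sum_one_sub_mul_le (hp : p < n) (hσ : Antitone σ)
    (hσp : 0 ≤ σ ⟨p, hp⟩) (hgap : ∀ i : Fin n, (i : ℕ) < p → σ ⟨p, hp⟩ < σ i)
    (hc0 : ∀ i, 0 ≤ c i) (hc1 : ∀ i, c i ≤ 1) (hc : ∑ i, c i ≤ p)
    (h : ∑ i, (1 - c i) * σ i ≤ ∑ i, (1 - prefixIndicator n p i) * σ i) :
    c = prefixIndicator n p := by
  rw [sum_one_sub_mul_eq hp.le σ c (σ ⟨p, hp⟩)] at h
  have h₁ := fun i (_ : i ∈ Finset.univ) => prefixIndicator_mul_sub_mul_nonneg hp hσ hc1 i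
  have h₂ := Finset.sum_nonneg fun i (_ : i ∈ Finset.univ) =>
    one_sub_prefixIndicator_mul_sub_mul_nonneg hp hσ hc0 i
  have h₃ := mul_nonneg hσp (sub_nonneg.2 hc)
  have hzero := (Finset.sum_eq_zero_iff_of_nonneg h₁).1
    (le_antisymm (by linarith) (Finset.sum_nonneg h₁))
  refine eq_prefixIndicator_of_forall_lt hp.le hc0 hc fun i hi => ?_
  have hi' := hzero i (Finset.mem_univ i)
  rw [prefixIndicator, if_pos hi, one_mul, mul_eq_zero, sub_eq_zero, sub_eq_zero] at hi'
  exact hi'.resolve_left (hgap i hi).ne' |>.symm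

end KyFan

section EckartYoung

variable {n N p : ℕ} {σ : Fin n → ℝ} {Y : Matrix (Fin n) (Fin N) ℝ}

lemma eq_sum_sq_of_mul_transpose_eq_diagonal (hY : Y * Yᵀ = diagonal σ) (i : Fin n) :
    σ i = ∑ j, Y i j ^ 2 := by
  simpa [mul_apply, sq] using (congrFun (congrFun hY i) i).symm

lemma isStarProjection_diagonal_prefixIndicator :
    IsStarProjection (diagonal (prefixIndicator n p)) where
  isIdempotentElem := by
    rw [IsIdempotentElem, diagonal_mul_diagonal]
    congr 1
    funext i
    unfold prefixIndicator
    split_ifs <;> simp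
  isSelfAdjoint := by
    rw [IsSelfAdjoint, star_eq_conjTranspose, diagonal_conjTranspose, star_trivial]

lemma frobSq_diagonal_prefixIndicator_mul_sub (hY : Y * Yᵀ = diagonal σ) :
    frobSq (diagonal (prefixIndicator n p) * Y - Y) =
      ∑ i, (1 - prefixIndicator n p i) * σ i := by
  have h : Y - diagonal (prefixIndicator n p) * Y =
      (1 - diagonal (prefixIndicator n p)) * Y := by
    rw [Matrix.sub_mul, Matrix.one_mul]
  rw [← frobSq_neg, neg_sub, h,
    isStarProjection_diagonal_prefixIndicator.one_sub.frobSq_mul_eq_sum hY]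
  simp [one_apply]

lemma diagonal_prefixIndicator_mul_eq_self_of_rank_le (hσ : Antitone σ)
    (hY : Y * Yᵀ = diagonal σ) (hr : Y.rank ≤ p) : diagonal (prefixIndicator n p) * Y = Y := by
  have htail : ∀ i : Fin n, p ≤ i → σ i = 0 := by
    intro i hi
    by_contra hne
    have hpos : 0 < σ i :=
      (eq_sum_sq_of_mul_transpose_eq_diagonal hY i ▸ by positivity : 0 ≤ σ i).lt_of_ne' hne
    have hsub : Finset.Iic i ⊆ Finset.univ.filter (σ · ≠ 0) := fun j hj => by
      simpa using (hpos.trans_le (hσ (Finset.mem_Iic.1 hj))).ne'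
    have := Finset.card_le_card hsub
    rw [Fin.card_Iic, ← Fintype.card_subtype, ← rank_diagonal, ← hY,
      rank_self_mul_transpose] at this
    omega
  ext i j
  rw [diagonal_mul, prefixIndicator]
  split_ifs with hi
  · rw [one_mul]
  · have h0 := eq_sum_sq_of_mul_transpose_eq_diagonal hY i
    rw [htail i (not_lt.1 hi), eq_comm,
      Fintype.sum_eq_zero_iff_of_nonneg fun _ => sq_nonneg _] at h0
    rw [zero_mul]
    exact (pow_eq_zero_iff two_ne_zero |>.1 (congrFun h0 j)).symm

theorem eq_diagonal_prefixIndicator_mul_of_frobSq_le (hp : p < n) (hσ : Antitone σ)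
    (hgap : ∀ i : Fin n, (i : ℕ) < p → σ ⟨p, hp⟩ < σ i) (hY : Y * Yᵀ = diagonal σ)
    {Z : Matrix (Fin n) (Fin N) ℝ} (hZ : Z.rank ≤ p)
    (hmin : frobSq (Z - Y) ≤ frobSq (diagonal (prefixIndicator n p) * Y - Y)) :
    Z = diagonal (prefixIndicator n p) * Y := by
  obtain ⟨Q, hQ, hQZ, hQr⟩ := exists_isStarProjection_mul_eq_self Z
  have hσp : 0 ≤ σ ⟨p, hp⟩ := by rw [eq_sum_sq_of_mul_transpose_eq_diagonal hY]; positivity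
  have htr : ∑ i, Q.diag i ≤ p := by
    rw [← trace, trace_eq_rank_of_isIdempotentElem hQ.isIdempotentElem, hQr]
    exact_mod_cast hZ
  have hsplit : frobSq (Z - Y) = frobSq (Z - Q * Y) + ∑ i, (1 - Q.diag i) * σ i := by
    have h₁ : Q * (Z - Y) = Z - Q * Y := by rw [Matrix.mul_sub, hQZ]
    have h₂ : (1 - Q) * (Z - Y) = -((1 - Q) * Y) := by
      rw [Matrix.mul_sub, Matrix.sub_mul, Matrix.one_mul, hQZ, sub_self, zero_sub]
    rw [hQ.frobSq_eq_add, h₁, h₂, frobSq_neg, hQ.one_sub.frobSq_mul_eq_sum hY]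
    simp [Matrix.sub_apply]
  rw [frobSq_diagonal_prefixIndicator_mul_sub hY, hsplit] at hmin
  have hKyFan := sum_one_sub_prefixIndicator_mul_le (c := Q.diag) hp hσ hσp hQ.diag_nonneg
    hQ.diag_le_one htr
  have hdiag : Q.diag = prefixIndicator n p :=
    eq_prefixIndicator_of_sum_one_sub_mul_le hp hσ hσp hgap hQ.diag_nonneg hQ.diag_le_one htr
      (by linarith [frobSq_nonneg (Z - Q * Y)])
  have hQY : frobSq (Z - Q * Y) = 0 := le_antisymm (by linarith) (frobSq_nonneg _)
  have hQE : Q = diagonal (prefixIndicator n p) := by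
    rw [hQ.eq_diagonal_diag fun i => ?_, hdiag]
    rw [← diag_apply Q i, hdiag, prefixIndicator]
    split_ifs <;> simp
  rw [← hQE]
  exact sub_eq_zero.1 (frobSq_eq_zero_iff.1 hQY)

end EckartYoung

lemma exists_mul_transpose_eq_diagonal_prefixIndicator {n d p : ℕ} (hpd : p ≤ d) :
    ∃ S : Matrix (Fin n) (Fin d) ℝ, S * Sᵀ = diagonal (prefixIndicator n p) := by
  refine ⟨of fun i k => if (i : ℕ) = k ∧ (i : ℕ) < p then 1 else 0, ?_⟩
  ext i j
  simp only [mul_apply, transpose_apply, of_apply, diagonal_apply, prefixIndicator]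
  by_cases hi : (i : ℕ) < p
  · rw [Finset.sum_eq_single ⟨i, hi.trans_le hpd⟩ (fun k _ hk => ?_) (by simp)]
    · by_cases hij : i = j <;> simp [hi, Fin.val_eq_val, eq_comm, hij]
    · rw [if_neg fun h => hk (Fin.ext h.1.symm), zero_mul]
  · simp [hi]

lemma Matrix.submatrix_castLE_mul_transpose {n p : ℕ} (h : p ≤ n) (V : Matrix (Fin n) (Fin n) ℝ) :
    V.submatrix id (Fin.castLE h) * (V.submatrix id (Fin.castLE h))ᵀ =
      V * diagonal (prefixIndicator n p) * Vᵀ := by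
  have himg : Finset.univ.filter (fun k : Fin n => (k : ℕ) < p) =
      Finset.univ.map (Fin.castLEEmb h) := by
    ext k
    simp only [Finset.mem_filter, Finset.mem_univ, true_and, Finset.mem_map]
    exact ⟨fun hk => ⟨⟨k, hk⟩, rfl⟩, fun ⟨l, hl⟩ => hl ▸ l.isLt⟩
  ext i j
  rw [mul_apply, mul_apply]
  simp only [mul_diagonal, submatrix_apply, transpose_apply, id, prefixIndicator, mul_ite,
    mul_one, mul_zero, ite_mul, zero_mul]
  rw [← Finset.sum_filter, himg, Finset.sum_map]
  rfl

theorem eq_of_forall_frobSq_mul_sub_le {n N d p : ℕ} (hpd : p ≤ d) {σ : Fin n → ℝ}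
    (hσ : Antitone σ) {V : Matrix (Fin n) (Fin n) ℝ} (hV : Vᵀ * V = 1)
    {Y Z : Matrix (Fin n) (Fin N) ℝ} (hYV : Y * Yᵀ * V = V * diagonal σ)
    (hgap : Y.rank ≤ p ∨ ∃ (h1 : 1 ≤ p) (h2 : p < n), σ ⟨p, h2⟩ < σ ⟨p - 1, by omega⟩)
    (hZ : Z.rank ≤ p)
    (hmin : ∀ (C₂ : Matrix (Fin n) (Fin d) ℝ) (C₁ : Matrix (Fin d) (Fin N) ℝ),
      frobSq (Z - Y) ≤ frobSq (C₂ * C₁ - Y)) :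
    Z = V * diagonal (prefixIndicator n p) * Vᵀ * Y := by
  set E := diagonal (prefixIndicator n p)
  have hV' : Vᵀᵀ * Vᵀ = 1 := by rw [transpose_transpose, mul_eq_one_comm.mp hV]
  have hdiag : (Vᵀ * Y) * (Vᵀ * Y)ᵀ = diagonal σ := by
    rw [transpose_mul, transpose_transpose, Matrix.mul_assoc, ← Matrix.mul_assoc Y,
      ← Matrix.mul_assoc, Matrix.mul_assoc Vᵀ, hYV, ← Matrix.mul_assoc, hV, Matrix.one_mul]
  have hmin' : frobSq (Vᵀ * Z - Vᵀ * Y) ≤ frobSq (E * (Vᵀ * Y) - Vᵀ * Y) := by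
    obtain ⟨S, hS⟩ := exists_mul_transpose_eq_diagonal_prefixIndicator (n := n) hpd
    have hfac : Vᵀ * (V * S * (Sᵀ * Vᵀ * Y)) = E * (Vᵀ * Y) := by
      simp only [E, ← hS, Matrix.mul_assoc]
      rw [← Matrix.mul_assoc Vᵀ V, hV, Matrix.one_mul]
    have h := hmin (V * S) (Sᵀ * Vᵀ * Y)
    rwa [← frobSq_mul_of_transpose_mul_self_eq_one hV',
      ← frobSq_mul_of_transpose_mul_self_eq_one hV' (_ - Y), Matrix.mul_sub, Matrix.mul_sub,
      hfac] at h
  have hZE : Vᵀ * Z = E * (Vᵀ * Y) := by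
    rcases hgap with hr | ⟨h1, h2, hgap⟩
    · have hEY : E * (Vᵀ * Y) = Vᵀ * Y := diagonal_prefixIndicator_mul_eq_self_of_rank_le hσ
        hdiag ((rank_mul_le_right _ _).trans hr)
      rw [hEY, sub_self] at hmin'
      rw [hEY, ← sub_eq_zero, ← frobSq_eq_zero_iff]
      exact le_antisymm (by simpa [frobSq] using hmin') (frobSq_nonneg _)
    · refine eq_diagonal_prefixIndicator_mul_of_frobSq_le h2 hσ (fun i hi => ?_) hdiag
        ((rank_mul_le_right _ _).trans hZ) hmin'
      exact hgap.trans_le (hσ (Fin.le_def.2 (show (i : ℕ) ≤ p - 1 by omega)))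
  calc Z = V * (Vᵀ * Z) := by rw [← Matrix.mul_assoc, mul_eq_one_comm.mp hV, Matrix.one_mul]
    _ = V * E * Vᵀ * Y := by rw [hZE]; simp only [Matrix.mul_assoc]

namespace Matrix

section FullColumnRank

variable {m n : ℕ} {A : Matrix (Fin m) (Fin n) ℝ}

lemma isUnit_det_transpose_mul_self (hA : A.rank = n) : IsUnit (Aᵀ * A).det := by
  rw [← isUnit_iff_isUnit_det, ← mulVec_surjective_iff_isUnit, ← coe_mulVecLin,
    ← LinearMap.range_eq_top]
  apply Submodule.eq_top_of_finrank_eq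
  rw [Module.finrank_fin_fun]
  exact (rank_transpose_mul_self A).trans hA

lemma inv_transpose_mul_self_mul_transpose_mul (hA : A.rank = n) :
    (Aᵀ * A)⁻¹ * Aᵀ * A = 1 := by
  rw [Matrix.mul_assoc, nonsing_inv_mul _ (isUnit_det_transpose_mul_self hA)]

lemma isStarProjection_mul_inv_transpose_mul_self_mul_transpose (hA : A.rank = n) :
    IsStarProjection (A * (Aᵀ * A)⁻¹ * Aᵀ) where
  isIdempotentElem := by
    simp only [IsIdempotentElem, Matrix.mul_assoc]
    rw [← Matrix.mul_assoc Aᵀ A, ← Matrix.mul_assoc (Aᵀ * A)⁻¹,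
      nonsing_inv_mul _ (isUnit_det_transpose_mul_self hA), Matrix.one_mul]
  isSelfAdjoint := by
    rw [IsSelfAdjoint, star_eq_conjTranspose, conjTranspose_eq_transpose_of_trivial,
      transpose_mul, transpose_mul, transpose_nonsing_inv, transpose_mul, transpose_transpose,
      Matrix.mul_assoc]

lemma transpose_mul_one_sub_mul_inv_transpose_mul_self_mul_transpose (hA : A.rank = n) :
    Aᵀ * (1 - A * (Aᵀ * A)⁻¹ * Aᵀ) = 0 := by
  rw [Matrix.mul_sub, Matrix.mul_one, ← Matrix.mul_assoc, ← Matrix.mul_assoc,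
    mul_nonsing_inv _ (isUnit_det_transpose_mul_self hA), Matrix.one_mul, sub_self]

end FullColumnRank

lemma rank_mul_mul_le_min {m k l n : ℕ} (A : Matrix (Fin m) (Fin k) ℝ)
    (B : Matrix (Fin k) (Fin l) ℝ) (C : Matrix (Fin l) (Fin n) ℝ) :
    (A * B * C).rank ≤ min l (min k m) := by
  have h : (A * B * C).rank ≤ (A * B).rank := rank_mul_le_left _ _
  exact le_min (h.trans ((rank_mul_le_right _ _).trans (rank_le_width _)))
    (le_min (h.trans ((rank_mul_le_left _ _).trans (rank_le_width _))) (rank_le_height _))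

end Matrix

theorem ContinuousLinearMap.map_eq_map_zero_of_tendsto {E F : Type*} [NormedAddCommGroup E]
    [NormedSpace ℝ E] [NormedAddCommGroup F] [NormedSpace ℝ F] (L : E →L[ℝ] F)
    {f f' : ℝ → E} {x : E} (hf : ∀ t ∈ Set.Ici (0 : ℝ), HasDerivWithinAt f (f' t) (Set.Ici 0) t)
    (hL : ∀ t ∈ Set.Ici (0 : ℝ), L (f' t) = 0) (hx : Tendsto f atTop (𝓝 x)) :
    L x = L (f 0) := by
  have hg : ∀ t ∈ Set.Ici (0 : ℝ), HasDerivWithinAt (L ∘ f) 0 (Set.Ici 0) t := fun t ht =>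
    hL t ht ▸ L.hasFDerivAt.comp_hasDerivWithinAt t (hf t ht)
  have hconst : ∀ t ∈ Set.Ici (0 : ℝ), L (f t) = L (f 0) := fun t ht =>
    constant_of_has_deriv_right_zero
      (fun s hs => (hg s hs.1).continuousWithinAt.mono Set.Icc_subset_Ici_self)
      (fun s hs => (hg s hs.1).mono (Set.Ici_subset_Ici.2 hs.1)) t ⟨ht, le_rfl⟩
  exact tendsto_nhds_unique ((L.continuous.tendsto x).comp hx)
    (tendsto_const_nhds.congr' (eventually_atTop.2 ⟨0, fun t ht => (hconst t ht).symm⟩))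

lemma mul_eq_mul_of_hasDerivWithinAt_of_tendsto {k l m : ℕ}
    {W W' : ℝ → Matrix (Fin k) (Fin l) ℝ} {Winf : Matrix (Fin k) (Fin l) ℝ}
    {P : Matrix (Fin l) (Fin m) ℝ}
    (hW : ∀ t ∈ Set.Ici (0 : ℝ), HasDerivWithinAt W (W' t) (Set.Ici 0) t)
    (hW'P : ∀ t ∈ Set.Ici (0 : ℝ), W' t * P = 0) (hlim : Tendsto W atTop (𝓝 Winf)) :
    Winf * P = W 0 * P :=
  (mulRightLinearMap (Fin k) ℝ P).toContinuousLinearMap.map_eq_map_zero_of_tendsto hW hW'P hlim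

lemma frobSq_sub_le_of_isMinimizer {N dx dy d1 : ℕ} {X Xε : Matrix (Fin dx) (Fin N) ℝ}
    (hX : X.rank = N) (hXε : Xε.rank = N) {Y : Matrix (Fin dy) (Fin N) ℝ} {lam : ℝ}
    (hlam : 0 ≤ lam) {Wt2 W2inf : Matrix (Fin dy) (Fin d1) ℝ}
    {Wt1 W1inf : Matrix (Fin d1) (Fin dx) ℝ}
    (hteacher : ∀ (W2' : Matrix (Fin dy) (Fin d1) ℝ) (W1' : Matrix (Fin d1) (Fin dx) ℝ),
      frobSq (Wt2 * Wt1 * X - Y) ≤ frobSq (W2' * W1' * X - Y))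
    (hmin : ∀ (W2' : Matrix (Fin dy) (Fin d1) ℝ) (W1' : Matrix (Fin d1) (Fin dx) ℝ),
      frobSq (W2inf * W1inf * Xε - Y) + lam * frobSq (W1inf * Xε - Wt1 * X)
        ≤ frobSq (W2' * W1' * Xε - Y) + lam * frobSq (W1' * Xε - Wt1 * X))
    (C₂ : Matrix (Fin dy) (Fin d1) ℝ) (C₁ : Matrix (Fin d1) (Fin N) ℝ) :
    frobSq (W2inf * W1inf * Xε - Y) ≤ frobSq (C₂ * C₁ - Y) := by
  set Lε := (Xεᵀ * Xε)⁻¹ * Xεᵀ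
  set L := (Xᵀ * X)⁻¹ * Xᵀ
  have hLε : Wt1 * X * Lε * Xε = Wt1 * X := by
    rw [Matrix.mul_assoc _ Lε, inv_transpose_mul_self_mul_transpose_mul hXε, Matrix.mul_one]
  calc frobSq (W2inf * W1inf * Xε - Y)
      ≤ frobSq (W2inf * W1inf * Xε - Y) + lam * frobSq (W1inf * Xε - Wt1 * X) :=
        le_add_of_nonneg_right (mul_nonneg hlam (frobSq_nonneg _))
    _ ≤ frobSq (Wt2 * (Wt1 * X * Lε) * Xε - Y) + lam * frobSq (Wt1 * X * Lε * Xε - Wt1 * X) :=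
        hmin _ _
    _ = frobSq (Wt2 * Wt1 * X - Y) := by
        rw [hLε, sub_self, Matrix.mul_assoc Wt2, hLε, Matrix.mul_assoc Wt2]
        simp [frobSq]
    _ ≤ frobSq (C₂ * (C₁ * L) * X - Y) := hteacher _ _
    _ = frobSq (C₂ * C₁ - Y) := by
        rw [Matrix.mul_assoc, Matrix.mul_assoc, inv_transpose_mul_self_mul_transpose_mul hX,
          Matrix.mul_one]

/-- bias of the student-teacher-induced gradient flow in the undersampled
regime `N < d_x`.  Here `σ` is the decreasing list of eigenvalues of `YYᵀ`, `V` an orthogonal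
matrix of corresponding eigenvectors, and `U = U_p` consists of the first
`p = min(d_x,d_1,d_y)` columns of `V`.  If the differentiable trajectories `(W₁(t), W₂(t))`
follow the gradient flow of the student-teacher loss with `‖W₁(0)‖_F ≤ δ`,
`‖W₂(t)‖_F ≤ M` for all `t ≥ 0`, and converge to a global minimizer
`(W₂(∞), W₁(∞))` of the student-teacher loss, then
`‖W₂(∞)W₁(∞) − U_pU_pᵀ Y (X_εᵀX_ε)⁻¹ X_εᵀ‖_F ≤ M δ`. -/
theorem stmt19
    (N dx dy d1 : ℕ)
    (X Xε : Matrix (Fin dx) (Fin N) ℝ) (hX : X.rank = N) (hXε : Xε.rank = N)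
    (Y : Matrix (Fin dy) (Fin N) ℝ)
    (σ : Fin dy → ℝ) (hσ : Antitone σ)
    (V : Matrix (Fin dy) (Fin dy) ℝ) (hV : Vᵀ * V = 1)
    (hAV : Y * Yᵀ * V = V * Matrix.diagonal σ)
    (hgap : Y.rank ≤ min dx (min d1 dy) ∨
      ∃ (h1 : 1 ≤ min dx (min d1 dy)) (h2 : min dx (min d1 dy) < dy),
        σ ⟨min dx (min d1 dy), h2⟩ < σ ⟨min dx (min d1 dy) - 1, by omega⟩)
    (U : Matrix (Fin dy) (Fin (min dx (min d1 dy))) ℝ)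
    (hU : U = V.submatrix id (Fin.castLE ((min_le_right _ _).trans (min_le_right _ _))))
    (lam η δ M : ℝ) (hlam : 0 < lam)
    (Wt2 : Matrix (Fin dy) (Fin d1) ℝ) (Wt1 : Matrix (Fin d1) (Fin dx) ℝ)
    (hteacher : ∀ (W2' : Matrix (Fin dy) (Fin d1) ℝ) (W1' : Matrix (Fin d1) (Fin dx) ℝ),
        frobSq (Wt2 * Wt1 * X - Y) ≤ frobSq (W2' * W1' * X - Y))
    (W1 : ℝ → Matrix (Fin d1) (Fin dx) ℝ) (W2 : ℝ → Matrix (Fin dy) (Fin d1) ℝ)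
    (hW1deriv : ∀ t ∈ Set.Ici (0 : ℝ),
      HasDerivWithinAt W1
        (η • ((W2 t)ᵀ * (Y - W2 t * W1 t * Xε) * Xεᵀ)
          + (η * lam) • ((Wt1 * X - W1 t * Xε) * Xεᵀ)) (Set.Ici 0) t)
    (hW1init : frobNorm (W1 0) ≤ δ)
    (hW2bd : ∀ t ∈ Set.Ici (0 : ℝ), frobNorm (W2 t) ≤ M)
    (W1inf : Matrix (Fin d1) (Fin dx) ℝ) (W2inf : Matrix (Fin dy) (Fin d1) ℝ)
    (hconv1 : Filter.Tendsto W1 Filter.atTop (nhds W1inf))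
    (hconv2 : Filter.Tendsto W2 Filter.atTop (nhds W2inf))
    (hmin : ∀ (W2' : Matrix (Fin dy) (Fin d1) ℝ) (W1' : Matrix (Fin d1) (Fin dx) ℝ),
        frobSq (W2inf * W1inf * Xε - Y) + lam * frobSq (W1inf * Xε - Wt1 * X)
          ≤ frobSq (W2' * W1' * Xε - Y) + lam * frobSq (W1' * Xε - Wt1 * X)) :
    frobNorm (W2inf * W1inf - U * Uᵀ * Y * (Xεᵀ * Xε)⁻¹ * Xεᵀ) ≤ M * δ := by
  set P := 1 - Xε * (Xεᵀ * Xε)⁻¹ * Xεᵀ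
  have hP : IsStarProjection P :=
    (isStarProjection_mul_inv_transpose_mul_self_mul_transpose hXε).one_sub
  have hXεP : Xεᵀ * P = 0 := transpose_mul_one_sub_mul_inv_transpose_mul_self_mul_transpose hXε
  have hW1P : W1inf * P = W1 0 * P :=
    mul_eq_mul_of_hasDerivWithinAt_of_tendsto hW1deriv (fun t _ => by
      simp only [Matrix.add_mul, Matrix.smul_mul, Matrix.mul_assoc, hXεP, Matrix.mul_zero,
        smul_zero, add_zero]) hconv1
  have hW2inf : frobNorm W2inf ≤ M :=
    le_of_tendsto ((continuous_frobNorm.tendsto _).comp hconv2) (eventually_atTop.2 ⟨0, hW2bd⟩)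
  have hZ : W2inf * W1inf * Xε = U * Uᵀ * Y := by
    rw [hU, submatrix_castLE_mul_transpose]
    exact eq_of_forall_frobSq_mul_sub_le ((min_le_right _ _).trans (min_le_left _ _)) hσ hV hAV
      hgap (rank_mul_mul_le_min _ _ _)
      (frobSq_sub_le_of_isMinimizer hX hXε hlam.le hteacher hmin)
  have hres : W2inf * W1inf - U * Uᵀ * Y * (Xεᵀ * Xε)⁻¹ * Xεᵀ = W2inf * (W1 0 * P) := by
    rw [← hW1P, ← hZ]
    simp only [P, Matrix.mul_sub, Matrix.mul_one, Matrix.mul_assoc]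
  rw [hres]
  calc frobNorm (W2inf * (W1 0 * P)) ≤ frobNorm W2inf * frobNorm (W1 0 * P) :=
        frobNorm_mul_le _ _
    _ ≤ M * δ := mul_le_mul_of_nonneg hW2inf ((hP.frobNorm_mul_le _).trans hW1init)
        (frobNorm_nonneg _) ((frobNorm_nonneg _).trans hW1init)
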